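/- Let $(\alpha_n)_{n\geq 1}$ be a sequence with $\alpha_n \in (c, c')$, $0 < c < c'$, $\beta_k^n = \alpha_k\cdots\alpha_{k+n-1}$, and $d_n = \inf_{k\geq 1}\beta_k^n$. Then the following are equivalent: (i) $\lim_{n\to\infty}(d_n)^{-1/n} < 1$; (ii) $\sum_{n=1}^\infty (d_n)^{-1} < \infty$; (iii) $\sup_{k\geq 1}\sum_{n=1}^\infty(\beta_k^n)^{-1} < \infty$. -/

import Mathlib

/-!
Since `β_k^{m+n} = β_k^m β_{k+m}^n`, the sequence `d` is supermultiplicative, so `-log d_n` is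
subadditive and Fekete's lemma gives `d_n^{-1/n} → L`. If `L < 1` the root test gives (ii), and
(ii) ⇒ (iii) by comparison, since `d_n ≤ β_k^n`. For (iii) ⇒ (i), if every `∑_n (β_k^n)⁻¹` is at
most `1 + M` and every term `(β_k^n)⁻¹` (`n ≥ 1`) is at most `M`, then splitting `β_k^N` at each
`m < N` gives `N (β_k^N)⁻¹ ≤ (1 + M) M`; hence `d_N > 1` for large `N`, and `L ≤ d_N^{-1/N} < 1`.
-/

open Filter Finset

/-- `beta α k n = α_k ⋯ α_{k+n-1}`. -/
noncomputable def beta (α : ℕ → ℝ) (k n : ℕ) : ℝ := ∏ j ∈ Finset.range n, α (k + j)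

/-- `d_n = inf_k β_k^n`. -/
noncomputable def dseq (α : ℕ → ℝ) (n : ℕ) : ℝ := ⨅ k, beta α k n

theorem summable_of_tendsto_rpow_inv_lt_one {f : ℕ → ℝ} (hf : ∀ n, 0 ≤ f n) {L : ℝ}
    (hL : L < 1) (h : Tendsto (fun n : ℕ => f n ^ ((n : ℝ)⁻¹)) atTop (nhds L)) : Summable f := by
  obtain ⟨r, hLr, hr1⟩ := exists_between (max_lt hL zero_lt_one)
  have hr0 : 0 ≤ r := (le_max_right L 0).trans hLr.le
  refine Summable.of_norm_bounded_eventually_nat (summable_geometric_of_lt_one hr0 hr1) ?_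
  filter_upwards [h.eventually (gt_mem_nhds ((le_max_left L 0).trans_lt hLr)),
    eventually_ne_atTop 0] with n hn hn0
  rw [Real.norm_of_nonneg (hf n), ← Real.rpow_inv_natCast_pow (hf n) hn0]
  exact pow_le_pow_left₀ (Real.rpow_nonneg (hf n) _) hn.le n

section Fekete

variable {d : ℕ → ℝ}

theorem subadditive_neg_log (hpos : ∀ n, 0 < d n) (hmul : ∀ m n, d m * d n ≤ d (m + n)) :
    Subadditive fun n => -Real.log (d n) := fun m n => by
  have := Real.log_le_log (mul_pos (hpos m) (hpos n)) (hmul m n)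
  rw [Real.log_mul (hpos m).ne' (hpos n).ne'] at this
  linarith

theorem bddBelow_neg_log_div {C : ℝ} (hpos : ∀ n, 0 < d n) (hC : ∀ n, d n ≤ C ^ n) :
    BddBelow (Set.range fun n : ℕ => -Real.log (d n) / n) := by
  refine ⟨-|Real.log C|, ?_⟩
  rintro _ ⟨n, rfl⟩
  rcases Nat.eq_zero_or_pos n with rfl | hn
  · simp
  have hlog : Real.log (d n) ≤ n * Real.log C := by
    rw [← Real.log_pow]
    exact Real.log_le_log (hpos n) (hC n)
  have hn' : (0 : ℝ) < n := Nat.cast_pos.2 hn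
  rw [le_div_iff₀ hn']
  nlinarith [le_abs_self (Real.log C)]

theorem tendsto_inv_rpow_inv_exp_lim (hpos : ∀ n, 0 < d n)
    (hsub : Subadditive fun n => -Real.log (d n))
    (hbdd : BddBelow (Set.range fun n : ℕ => -Real.log (d n) / n)) :
    Tendsto (fun n : ℕ => (d n)⁻¹ ^ ((n : ℝ)⁻¹)) atTop (nhds (Real.exp hsub.lim)) := by
  refine ((Real.continuous_exp.tendsto _).comp (hsub.tendsto_lim hbdd)).congr fun n => ?_
  rw [Function.comp_apply, Real.rpow_def_of_pos (inv_pos.2 (hpos n)), Real.log_inv,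
    div_eq_mul_inv]

theorem exists_lt_one_tendsto_inv_rpow_inv {C : ℝ} (hpos : ∀ n, 0 < d n)
    (hmul : ∀ m n, d m * d n ≤ d (m + n)) (hC : ∀ n, d n ≤ C ^ n) {N : ℕ} (hN : N ≠ 0)
    (hdN : 1 < d N) :
    ∃ L < (1 : ℝ), Tendsto (fun n : ℕ => (d n)⁻¹ ^ ((n : ℝ)⁻¹)) atTop (nhds L) := by
  have hsub := subadditive_neg_log hpos hmul
  have hbdd := bddBelow_neg_log_div hpos hC
  have hlim : hsub.lim < 0 :=
    (hsub.lim_le_div hbdd hN).trans_lt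
      (div_neg_of_neg_of_pos (neg_neg_of_pos (Real.log_pos hdN)) (Nat.cast_pos.2 hN.bot_lt))
  exact ⟨_, Real.exp_lt_one_iff.2 hlim, tendsto_inv_rpow_inv_exp_lim hpos hsub hbdd⟩

end Fekete

section Products

variable {α : ℕ → ℝ} {c : ℝ}

theorem beta_add (k m n : ℕ) : beta α k (m + n) = beta α k m * beta α (k + m) n := by
  simp only [beta, Finset.prod_range_add, add_assoc]

theorem beta_nonneg (hα : ∀ n, 0 ≤ α n) (k n : ℕ) : 0 ≤ beta α k n :=
  Finset.prod_nonneg fun _ _ => hα _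

theorem beta_pos (hα : ∀ n, 0 < α n) (k n : ℕ) : 0 < beta α k n :=
  Finset.prod_pos fun _ _ => hα _

theorem pow_le_beta (hc : 0 ≤ c) (hα : ∀ n, c ≤ α n) (k n : ℕ) : c ^ n ≤ beta α k n := by
  simpa [beta] using
    Finset.prod_le_prod (s := Finset.range n) (fun _ _ => hc) fun j _ => hα (k + j)

theorem beta_le_pow (hα₀ : ∀ n, 0 ≤ α n) (hα : ∀ n, α n ≤ c) (k n : ℕ) : beta α k n ≤ c ^ n := by
  simpa [beta] using
    Finset.prod_le_prod (s := Finset.range n) (fun j _ => hα₀ (k + j)) fun j _ => hα (k + j)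

theorem dseq_le_beta (hα : ∀ n, 0 ≤ α n) (k n : ℕ) : dseq α n ≤ beta α k n :=
  ciInf_le ⟨0, by rintro _ ⟨k, rfl⟩; exact beta_nonneg hα k n⟩ k

theorem dseq_nonneg (hα : ∀ n, 0 ≤ α n) (n : ℕ) : 0 ≤ dseq α n :=
  le_ciInf fun k => beta_nonneg hα k n

theorem dseq_pos (hc : 0 < c) (hα : ∀ n, c ≤ α n) (n : ℕ) : 0 < dseq α n :=
  (pow_pos hc n).trans_le (le_ciInf fun k => pow_le_beta hc.le hα k n)

theorem dseq_mul_le_dseq_add (hα : ∀ n, 0 ≤ α n) (m n : ℕ) :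
    dseq α m * dseq α n ≤ dseq α (m + n) :=
  le_ciInf fun k => by
    rw [beta_add]
    exact mul_le_mul (dseq_le_beta hα k m) (dseq_le_beta hα (k + m) n) (dseq_nonneg hα n)
      (beta_nonneg hα k m)

theorem dseq_le_pow (hα₀ : ∀ n, 0 ≤ α n) (hα : ∀ n, α n ≤ c) (n : ℕ) : dseq α n ≤ c ^ n :=
  (dseq_le_beta hα₀ 0 n).trans (beta_le_pow hα₀ hα 0 n)

theorem inv_beta_le_inv_dseq (hc : 0 < c) (hα : ∀ n, c ≤ α n) (k n : ℕ) :
    (beta α k n)⁻¹ ≤ (dseq α n)⁻¹ :=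
  inv_anti₀ (dseq_pos hc hα n) (dseq_le_beta (fun j => hc.le.trans (hα j)) k n)

end Products

section BoundedSums

variable {α : ℕ → ℝ} {M : ℝ}

theorem inv_beta_succ_le (hα : ∀ n, 0 < α n)
    (hsum : ∀ k, Summable fun n => (beta α k (n + 1))⁻¹)
    (hM : ∀ k, ∑' n, (beta α k (n + 1))⁻¹ ≤ M) (k n : ℕ) : (beta α k (n + 1))⁻¹ ≤ M :=
  ((hsum k).le_tsum n fun _ _ => inv_nonneg.2 (beta_pos hα k _).le).trans (hM k)

theorem sum_range_inv_beta_le (hα : ∀ n, 0 < α n)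
    (hsum : ∀ k, Summable fun n => (beta α k (n + 1))⁻¹)
    (hM : ∀ k, ∑' n, (beta α k (n + 1))⁻¹ ≤ M) (k N : ℕ) :
    ∑ m ∈ range N, (beta α k m)⁻¹ ≤ 1 + M := by
  have hM0 : 0 ≤ M := (inv_nonneg.2 (beta_pos hα k 1).le).trans (inv_beta_succ_le hα hsum hM k 0)
  cases N with
  | zero => simp only [Finset.range_zero, Finset.sum_empty]; linarith
  | succ N =>
    rw [Finset.sum_range_succ', add_comm]
    gcongr
    · simp [beta]
    · exact ((hsum k).sum_le_tsum _ (fun _ _ => inv_nonneg.2 (beta_pos hα k _).le)).trans (hM k)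

theorem natCast_mul_inv_beta_le (hα : ∀ n, 0 < α n)
    (hsum : ∀ k, Summable fun n => (beta α k (n + 1))⁻¹)
    (hM : ∀ k, ∑' n, (beta α k (n + 1))⁻¹ ≤ M) (k N : ℕ) :
    (N : ℝ) * (beta α k N)⁻¹ ≤ (1 + M) * M := by
  have hM0 : 0 ≤ M := (inv_nonneg.2 (beta_pos hα k 1).le).trans (inv_beta_succ_le hα hsum hM k 0)
  calc (N : ℝ) * (beta α k N)⁻¹ = ∑ _m ∈ range N, (beta α k N)⁻¹ := by simp
    _ ≤ ∑ m ∈ range N, (beta α k m)⁻¹ * M := by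
        refine Finset.sum_le_sum fun m hm => ?_
        obtain ⟨n, rfl⟩ := Nat.exists_eq_add_of_lt (Finset.mem_range.1 hm)
        rw [add_assoc, beta_add, mul_inv]
        exact mul_le_mul_of_nonneg_left (inv_beta_succ_le hα hsum hM _ _)
          (inv_nonneg.2 (beta_pos hα k m).le)
    _ = (∑ m ∈ range N, (beta α k m)⁻¹) * M := (Finset.sum_mul ..).symm
    _ ≤ (1 + M) * M := mul_le_mul_of_nonneg_right (sum_range_inv_beta_le hα hsum hM k N) hM0

theorem exists_one_lt_dseq (hα : ∀ n, 0 < α n)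
    (hsum : ∀ k, Summable fun n => (beta α k (n + 1))⁻¹)
    (hM : ∀ k, ∑' n, (beta α k (n + 1))⁻¹ ≤ M) : ∃ N ≠ 0, 1 < dseq α N := by
  have hM0 : 0 < M := (inv_pos.2 (beta_pos hα 0 1)).trans_le (inv_beta_succ_le hα hsum hM 0 0)
  have hMM : 0 < (1 + M) * M := by positivity
  obtain ⟨N, hN⟩ := exists_nat_gt ((1 + M) * M)
  refine ⟨N, (Nat.cast_pos.1 (hMM.trans hN)).ne', ?_⟩
  calc 1 < N / ((1 + M) * M) := (one_lt_div hMM).2 hN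
    _ ≤ dseq α N := le_ciInf fun k => by
        have := natCast_mul_inv_beta_le hα hsum hM k N
        rwa [← div_eq_mul_inv, div_le_iff₀ (beta_pos hα k N), mul_comm,
          ← div_le_iff₀ hMM] at this

end BoundedSums

theorem stmt1_general (c c' : ℝ) (α : ℕ → ℝ) (hc : 0 < c)
    (hα : ∀ n, α n ∈ Set.Ioo c c') :
    List.TFAE
      [ ∃ L < (1 : ℝ), Filter.Tendsto
          (fun n : ℕ => (dseq α n)⁻¹ ^ ((n : ℝ)⁻¹)) Filter.atTop (nhds L),
        Summable fun n => (dseq α (n + 1))⁻¹,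
        (∀ k, Summable fun n => (beta α k (n + 1))⁻¹) ∧
          ∃ M : ℝ, ∀ k, (∑' n, (beta α k (n + 1))⁻¹) ≤ M ] := by
  have hc_le : ∀ n, c ≤ α n := fun n => (hα n).1.le
  have hα_pos : ∀ n, 0 < α n := fun n => hc.trans (hα n).1
  have hα_nonneg : ∀ n, 0 ≤ α n := fun n => (hα_pos n).le
  have hd_pos := dseq_pos hc hc_le
  tfae_have 1 → 2 := fun ⟨L, hL, h⟩ => (summable_nat_add_iff 1).2 <|
    summable_of_tendsto_rpow_inv_lt_one (fun n => inv_nonneg.2 (hd_pos n).le) hL h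
  tfae_have 2 → 3 := fun h => by
    have hsum k := h.of_nonneg_of_le (fun n => inv_nonneg.2 (beta_pos hα_pos k _).le)
      (inv_beta_le_inv_dseq hc hc_le k <| · + 1)
    exact ⟨hsum, _, fun k =>
      (hsum k).tsum_le_tsum (inv_beta_le_inv_dseq hc hc_le k <| · + 1) h⟩
  tfae_have 3 → 1 := fun ⟨hsum, M, hM⟩ => by
    obtain ⟨N, hN, hdN⟩ := exists_one_lt_dseq hα_pos hsum hM
    exact exists_lt_one_tendsto_inv_rpow_inv hd_pos (dseq_mul_le_dseq_add hα_nonneg)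
      (dseq_le_pow hα_nonneg fun n => (hα n).2.le) hN hdN
  tfae_finish

theorem stmt1 (c c' : ℝ) (α : ℕ → ℝ) (hc : 0 < c) (hcc : c < c')
    (hα : ∀ n, α n ∈ Set.Ioo c c') :
    List.TFAE
      [ ∃ L < (1 : ℝ), Filter.Tendsto
          (fun n : ℕ => (dseq α n)⁻¹ ^ ((n : ℝ)⁻¹)) Filter.atTop (nhds L),
        Summable fun n => (dseq α (n + 1))⁻¹,
        (∀ k, Summable fun n => (beta α k (n + 1))⁻¹) ∧
          ∃ M : ℝ, ∀ k, (∑' n, (beta α k (n + 1))⁻¹) ≤ M ] :=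
  stmt1_general c c' α hc hα
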